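/- Suppose (Δ_h, w_h) is a weighted sound abstraction of (Δ_l, w_l) relative to m. Then for every high-level formula φ, Pr(φ, Δ_h, w_h) = 1 implies Pr(m(φ), Δ_l, w_l) = 1. -/

import Mathlib

/-- Propositional formulas over atoms of type `α`. -/
inductive Form (α : Type) where
  | tru : Form α
  | atom : α → Form α
  | neg : Form α → Form α
  | conj : Form α → Form α → Form α
  | disj : Form α → Form α → Form α

/-- Truth value of a formula in a model `M : α → Bool`. -/
def Form.eval {α : Type} (M : α → Bool) : Form α → Bool
  | .tru => true
  | .atom a => M a
  | .neg φ => !(φ.eval M)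
  | .conj φ ψ => φ.eval M && ψ.eval M
  | .disj φ ψ => φ.eval M || ψ.eval M

/-- Homomorphic extension of a refinement mapping `m` on atoms to all formulas. -/
def Form.map {α β : Type} (m : α → Form β) : Form α → Form β
  | .tru => .tru
  | .atom a => m a
  | .neg φ => .neg (φ.map m)
  | .conj φ ψ => .conj (φ.map m) (ψ.map m)
  | .disj φ ψ => .disj (φ.map m) (ψ.map m)

/-- The set of atoms mentioned in a formula. -/
def Form.atoms {α : Type} [DecidableEq α] : Form α → Finset α
  | .tru => ∅
  | .atom a => {a}
  | .neg φ => φ.atoms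
  | .conj φ ψ => φ.atoms ∪ ψ.atoms
  | .disj φ ψ => φ.atoms ∪ ψ.atoms

/-- Weighted model count of `Δ` under literal weights `w` (`w a true` is the
weight of the positive literal on atom `a`, `w a false` of the negative one). -/
noncomputable def WMC {α : Type} [Fintype α] [DecidableEq α]
    (Δ : Form α) (w : α → Bool → ℝ) : ℝ :=
  ∑ M ∈ Finset.univ.filter (fun M : α → Bool => Δ.eval M = true), ∏ a, w a (M a)

/-- `Pr(φ, Δ, w) = WMC(φ ∧ Δ, w) / WMC(Δ, w)`. -/
noncomputable def Pr {α : Type} [Fintype α] [DecidableEq α]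
    (φ Δ : Form α) (w : α → Bool → ℝ) : ℝ :=
  WMC (Form.conj φ Δ) w / WMC Δ w

/-- `Mh` is `m`-isomorphic to `Ml`. -/
def Iso {α β : Type} (m : α → Form β) (Mh : α → Bool) (Ml : β → Bool) : Prop :=
  ∀ a : α, Mh a = (m a).eval Ml


/-!
Call a model of positive weight *live*. With nonnegative weights, `Pr(φ, Δ, w) = 1` says exactly that
every live model of `Δ` satisfies `φ`, and `Pr(ψ, Δ, w) > 0` that some live model of `Δ` satisfies `ψ`.
Let `Ml` be a live model of `Δl` and `Mh` its `m`-isomorphic model of `Δh`. For each atom `a`, the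
literal `d` on `a` that `Mh` makes true has `m(d)` true in `Ml`, so `Pr(m(d), Δl, wl) > 0`; hence
`Pr(d, Δh, wh) > 0`, some live model of `Δh` agrees with `Mh` on `a`, and the weight of that literal is
nonzero. Thus `Mh` is live, so it satisfies `φ`, and `Ml` satisfies `m(φ)`.
-/

open Finset

theorem Form.eval_map {α β : Type} (m : α → Form β) (φ : Form α) (M : β → Bool) :
    (φ.map m).eval M = φ.eval (fun a => (m a).eval M) := by
  induction φ <;> simp [Form.map, Form.eval, *]

section Weights

variable {α : Type} [Fintype α] {w : α → Bool → ℝ}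

def modelWeight (w : α → Bool → ℝ) (M : α → Bool) : ℝ :=
  ∏ a, w a (M a)

theorem modelWeight_nonneg (hw : ∀ a b, 0 ≤ w a b) (M : α → Bool) : 0 ≤ modelWeight w M :=
  prod_nonneg fun a _ => hw a _

theorem modelWeight_ne_zero_iff {M : α → Bool} : modelWeight w M ≠ 0 ↔ ∀ a, w a (M a) ≠ 0 := by
  simp [modelWeight, prod_ne_zero_iff]

variable [DecidableEq α] {φ Δ : Form α}

theorem WMC_eq_sum_modelWeight :
    WMC Δ w = ∑ M ∈ univ.filter (fun M => Δ.eval M = true), modelWeight w M :=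
  rfl

theorem WMC_eq_WMC_conj_add_WMC_conj_neg (φ : Form α) :
    WMC Δ w = WMC (.conj φ Δ) w + WMC (.conj (.neg φ) Δ) w := by
  simp only [WMC_eq_sum_modelWeight, Form.eval]
  rw [← sum_filter_add_sum_filter_not _ (fun M => φ.eval M = true), filter_filter, filter_filter]
  congr 2 <;> ext M <;> simp [and_comm]

section Nonneg

variable (hw : ∀ a b, 0 ≤ w a b)
include hw

theorem WMC_nonneg : 0 ≤ WMC Δ w :=
  sum_nonneg fun M _ => modelWeight_nonneg hw M

theorem WMC_eq_zero_iff : WMC Δ w = 0 ↔ ∀ M, Δ.eval M = true → modelWeight w M = 0 := by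
  rw [WMC_eq_sum_modelWeight, sum_eq_zero_iff_of_nonneg fun M _ => modelWeight_nonneg hw M]
  simp

theorem Pr_pos_iff (hΔ : WMC Δ w ≠ 0) :
    0 < Pr φ Δ w ↔ ∃ M, φ.eval M = true ∧ Δ.eval M = true ∧ modelWeight w M ≠ 0 := by
  rw [Pr, div_pos_iff_of_pos_right ((WMC_nonneg hw).lt_of_ne' hΔ),
    (WMC_nonneg hw).lt_iff_ne', Ne, WMC_eq_zero_iff hw]
  simp [Form.eval]

theorem Pr_eq_one_iff (hΔ : WMC Δ w ≠ 0) :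
    Pr φ Δ w = 1 ↔ ∀ M, Δ.eval M = true → modelWeight w M ≠ 0 → φ.eval M = true := by
  rw [Pr, div_eq_one_iff_eq hΔ, WMC_eq_WMC_conj_add_WMC_conj_neg (Δ := Δ) φ, left_eq_add,
    WMC_eq_zero_iff hw]
  simp only [Form.eval, Bool.and_eq_true, Bool.not_eq_true']
  grind

theorem weight_ne_zero_of_Pr_pos {a : α} {c : Bool} (hΔ : WMC Δ w ≠ 0) (hpos : 0 < Pr φ Δ w)
    (hφ : ∀ M, φ.eval M = true → M a = c) : w a c ≠ 0 := by
  obtain ⟨M, hφM, -, hM⟩ := (Pr_pos_iff hw hΔ).1 hpos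
  exact hφ M hφM ▸ modelWeight_ne_zero_iff.1 hM a

end Nonneg

end Weights

theorem modelWeight_ne_zero_of_iso {α β : Type} [Fintype α] [DecidableEq α] [Fintype β]
    [DecidableEq β] {Δh : Form α} {Δl : Form β} {wh : α → Bool → ℝ} {wl : β → Bool → ℝ}
    {m : α → Form β} (hwh : ∀ a b, 0 ≤ wh a b) (hwl : ∀ a b, 0 ≤ wl a b)
    (hΔh : WMC Δh wh ≠ 0) (hΔl : WMC Δl wl ≠ 0)
    (hlit : ∀ a : α,
      (0 < Pr ((Form.atom a).map m) Δl wl → 0 < Pr (Form.atom a) Δh wh) ∧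
      (0 < Pr ((Form.neg (Form.atom a)).map m) Δl wl →
        0 < Pr (Form.neg (Form.atom a)) Δh wh))
    {Mh : α → Bool} {Ml : β → Bool} (hMl : Δl.eval Ml = true) (hwMl : modelWeight wl Ml ≠ 0)
    (hiso : Iso m Mh Ml) : modelWeight wh Mh ≠ 0 := by
  have hlow (ψ : Form α) (hψ : (ψ.map m).eval Ml = true) : 0 < Pr (ψ.map m) Δl wl :=
    (Pr_pos_iff hwl hΔl).2 ⟨Ml, hψ, hMl, hwMl⟩
  refine modelWeight_ne_zero_iff.2 fun a => ?_
  cases hMh : Mh a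
  · refine weight_ne_zero_of_Pr_pos hwh hΔh ((hlit a).2 (hlow _ ?_)) fun M hM => ?_
    · simpa [Form.map, Form.eval, ← hiso a] using hMh
    · simpa [Form.eval] using hM
  · refine weight_ne_zero_of_Pr_pos hwh hΔh ((hlit a).1 (hlow _ ?_)) fun M hM => hM
    simpa [Form.map, ← hiso a] using hMh

theorem stmt9 {α β : Type} [Fintype α] [DecidableEq α] [Fintype β] [DecidableEq β]
    (Δh : Form α) (Δl : Form β) (wh : α → Bool → ℝ) (wl : β → Bool → ℝ) (m : α → Form β)
    (hwh : ∀ a b, 0 ≤ wh a b) (hwl : ∀ a b, 0 ≤ wl a b)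
    (hΔh : WMC Δh wh ≠ 0) (hΔl : WMC Δl wl ≠ 0)
    (hsound : ∀ Ml : β → Bool, Δl.eval Ml = true →
      ∃ Mh : α → Bool, Δh.eval Mh = true ∧ Iso m Mh Ml)
    (hlit : ∀ a : α,
      (0 < Pr ((Form.atom a).map m) Δl wl → 0 < Pr (Form.atom a) Δh wh) ∧
      (0 < Pr ((Form.neg (Form.atom a)).map m) Δl wl →
        0 < Pr (Form.neg (Form.atom a)) Δh wh)) :
    ∀ φ : Form α, Pr φ Δh wh = 1 → Pr (φ.map m) Δl wl = 1 := by
  intro φ hφ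
  rw [Pr_eq_one_iff hwh hΔh] at hφ
  refine (Pr_eq_one_iff hwl hΔl).2 fun Ml hMl hwMl => ?_
  obtain ⟨Mh, hMh, hiso⟩ := hsound Ml hMl
  have hMh_eq : (fun a => (m a).eval Ml) = Mh := (funext hiso).symm
  rw [Form.eval_map, hMh_eq]
  exact hφ Mh hMh (modelWeight_ne_zero_of_iso hwh hwl hΔh hΔl hlit hMl hwMl hiso)
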